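/- arXiv:1811.10176 — 4 statements merged into one kernel-verified Lean document; each statement's English description precedes it below -/
import Mathlib

section
/- Let H be a histogram (a vector in R^g with nonnegative coordinates summing to 1) and define its support spt(H) = {j : H(j) > 0} and essential minimum b(H) = min over j ∈ spt(H) of H(j). Let B_N(H) be the set of N-rational histograms H' (i.e., N·H' has integer coordinates) with max_j |H'(j) − H(j)| ≤ 2/(3N). Then card(B_N(H)) ≤ 2^g, and if N > 2/b(H), every H' ∈ B_N(H) satisfies spt(H') = spt(H) and b(H') > b(H)/2. -/
open Real Finset

/-- `H` is a genetic histogram: nonnegative coordinates summing to 1. -/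
def IsHistogram {g : ℕ} (H : Fin g → ℝ) : Prop :=
  (∀ j, 0 ≤ H j) ∧ ∑ j, H j = 1

/-- Support of a histogram. -/
noncomputable def spt {g : ℕ} (H : Fin g → ℝ) : Finset (Fin g) :=
  Finset.univ.filter (fun j => 0 < H j)

/-- `H'` is `N`-rational: all coordinates of `N·H'` are (nonnegative) integers. -/
def NRational {g : ℕ} (N : ℕ) (H' : Fin g → ℝ) : Prop :=
  ∀ j, ∃ k : ℕ, H' j = (k : ℝ) / N

/-- The `N`-rational ball `B_N(H)` of radius `2/(3N)` around `H` (in sup distance). -/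
def ratBall {g : ℕ} (N : ℕ) (H : Fin g → ℝ) : Set (Fin g → ℝ) :=
  {H' | IsHistogram H' ∧ NRational N H' ∧ (∀ j, |H' j - H j| ≤ 2 / (3 * N))}

/-! Coordinatewise, an `N`-rational `H'` with `|H' j - H j| ≤ 2/(3N)` has `N H' j` an integer in an
interval of length `4/3` around `N H j`, so one of two consecutive integers: this gives the `2^g`
bound. If `N b(H) > 2` the radius `2/(3N)` is below `b(H)/3`, so the coordinates in `spt H` stay
above `b(H)/2`, while a coordinate outside `spt H` cannot reach the smallest positive value `1/N`. -/

theorem Int.eq_ceil_or_eq_ceil_add_one_of_abs_sub_le {k : ℤ} {y r : ℝ} (hr : r < 1)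
    (hk : |(k : ℝ) - y| ≤ r) : k = ⌈y - r⌉ ∨ k = ⌈y - r⌉ + 1 := by
  obtain ⟨hlo, hhi⟩ := abs_le.1 hk
  have hle : ⌈y - r⌉ ≤ k := Int.ceil_le.2 (by linarith)
  have hlt : k < ⌈y - r⌉ + 2 := by
    have := Int.le_ceil (y - r)
    exact_mod_cast (show (k : ℝ) < ⌈y - r⌉ + 2 by linarith)
  omega

theorem natCast_div_eq_or_eq_of_abs_sub_le {N k : ℕ} {x : ℝ}
    (hk : |(k : ℝ) / N - x| ≤ 2 / (3 * N)) :
    (k : ℝ) / N = ⌈N * x - 2 / 3⌉ / N ∨ (k : ℝ) / N = (⌈N * x - 2 / 3⌉ + 1) / N := by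
  rcases N.eq_zero_or_pos with rfl | hN
  · simp
  have hNR : (0 : ℝ) < N := by exact_mod_cast hN
  have hk' : |((k : ℤ) : ℝ) - N * x| ≤ 2 / 3 := by
    have hscale : (k : ℝ) - N * x = N * ((k : ℝ) / N - x) := by field_simp
    calc |((k : ℤ) : ℝ) - N * x| = N * |(k : ℝ) / N - x| := by
          rw [Int.cast_natCast, hscale, abs_mul, abs_of_pos hNR]
      _ ≤ N * (2 / (3 * N)) := by gcongr
      _ = 2 / 3 := by field_simp
  rcases Int.eq_ceil_or_eq_ceil_add_one_of_abs_sub_le (by norm_num) hk' with h | h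
  · left
    rw [← h, Int.cast_natCast]
  · right
    rw [← Int.cast_natCast, h, Int.cast_add, Int.cast_one]

section RatBall

variable {g N : ℕ} {H H' : Fin g → ℝ}

theorem mem_spt {j : Fin g} : j ∈ spt H ↔ 0 < H j := by
  simp [spt]

theorem inf'_spt_pos (hne : (spt H).Nonempty) : 0 < (spt H).inf' hne H :=
  (lt_inf'_iff _).2 fun _ hj => mem_spt.1 hj

theorem NRational.inv_le_of_pos (h : NRational N H') {j : Fin g} (hj : 0 < H' j) :
    (N : ℝ)⁻¹ ≤ H' j := by
  obtain ⟨k, hk⟩ := h j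
  have hk0 : k ≠ 0 := by
    rintro rfl
    simp [hk] at hj
  rw [hk, div_eq_mul_inv]
  exact le_mul_of_one_le_left (by positivity) (by exact_mod_cast Nat.one_le_iff_ne_zero.2 hk0)

/-- The point of `B_N(H)` whose `j`-th coordinate is the lower (`b j = false`) or upper
(`b j = true`) of the two candidates given by `natCast_div_eq_or_eq_of_abs_sub_le`. -/
noncomputable def ratBallCode (N : ℕ) (H : Fin g → ℝ) (b : Fin g → Bool) : Fin g → ℝ :=
  fun j => (⌈N * H j - 2 / 3⌉ + if b j then 1 else 0) / N

theorem ratBall_subset_range_ratBallCode : ratBall N H ⊆ Set.range (ratBallCode N H) := by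
  rintro H' ⟨-, hrat, hclose⟩
  have hcoord : ∀ j, ∃ β : Bool, (⌈N * H j - 2 / 3⌉ + if β then 1 else 0) / (N : ℝ) = H' j := by
    intro j
    obtain ⟨k, hk⟩ := hrat j
    have hj := hclose j
    rw [hk] at hj ⊢
    rcases natCast_div_eq_or_eq_of_abs_sub_le hj with h | h
    · exact ⟨false, by simp [h]⟩
    · exact ⟨true, by simp [h]⟩
  choose b hb using hcoord
  exact ⟨b, funext hb⟩

theorem ratBall_finite (N : ℕ) (H : Fin g → ℝ) : (ratBall N H).Finite :=
  (Set.finite_range _).subset ratBall_subset_range_ratBallCode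

theorem ratBall_ncard_le (N : ℕ) (H : Fin g → ℝ) : (ratBall N H).ncard ≤ 2 ^ g :=
  calc (ratBall N H).ncard ≤ (Set.range (ratBallCode N H)).ncard :=
        Set.ncard_le_ncard ratBall_subset_range_ratBallCode (Set.finite_range _)
    _ ≤ (Set.univ : Set (Fin g → Bool)).ncard := by
        rw [← Set.image_univ]
        exact Set.ncard_image_le Set.finite_univ
    _ = 2 ^ g := by simp [Set.ncard_univ]

theorem sub_le_of_mem_ratBall (hH' : H' ∈ ratBall N H) (j : Fin g) :
    H j - 2 / (3 * N) ≤ H' j := by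
  linarith [(abs_le.1 (hH'.2.2 j)).1]

theorem spt_subset_of_mem_ratBall (hN : 0 < N) (hH' : H' ∈ ratBall N H) : spt H' ⊆ spt H := by
  intro j hj
  have hNR : (0 : ℝ) < N := by exact_mod_cast hN
  have hinv := hH'.2.1.inv_le_of_pos (mem_spt.1 hj)
  have hclose := (abs_le.1 (hH'.2.2 j)).2
  have hgap : 2 / (3 * (N : ℝ)) < (N : ℝ)⁻¹ := by
    rw [div_lt_iff₀ (by positivity)]
    field_simp
    norm_num
  exact mem_spt.2 (by linarith)

theorem half_lt_of_mem_ratBall {b : ℝ} (hH' : H' ∈ ratBall N H) (hb : 0 < b) (hNb : 2 / b < N)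
    {j : Fin g} (hj : b ≤ H j) : b / 2 < H' j := by
  have hradius : 2 / (3 * (N : ℝ)) < b / 2 := by
    have hN : (0 : ℝ) < N := (div_pos two_pos hb).trans hNb
    rw [div_lt_iff₀ hb] at hNb
    rw [div_lt_div_iff₀ (by positivity) two_pos]
    nlinarith
  linarith [sub_le_of_mem_ratBall hH' j]

end RatBall

theorem ratBall_card_and_support_general {g N : ℕ}
    (H : Fin g → ℝ) (hne : (spt H).Nonempty) :
    (ratBall N H).Finite ∧ (ratBall N H).ncard ≤ 2 ^ g ∧
    ((2 / (spt H).inf' hne H < (N : ℝ)) →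
      ∀ H' ∈ ratBall N H, ∃ hne' : (spt H').Nonempty,
        spt H' = spt H ∧ (spt H).inf' hne H / 2 < (spt H').inf' hne' H') := by
  refine ⟨ratBall_finite N H, ratBall_ncard_le N H, fun hNb H' hH' => ?_⟩
  set b := (spt H).inf' hne H
  have hb : 0 < b := inf'_spt_pos hne
  have hN : 0 < N := by exact_mod_cast (div_pos two_pos hb).trans hNb
  have hspt : spt H' = spt H := by
    refine (spt_subset_of_mem_ratBall hN hH').antisymm fun j hj => mem_spt.2 ?_
    exact (half_pos hb).trans (half_lt_of_mem_ratBall hH' hb hNb (inf'_le _ hj))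
  refine ⟨hspt ▸ hne, hspt, (lt_inf'_iff _).2 fun j hj => ?_⟩
  exact half_lt_of_mem_ratBall hH' hb hNb (inf'_le _ (hspt ▸ hj))

/-- `B_N(H)` has at most `2^g` elements, and for `N > 2/b(H)` every `H' ∈ B_N(H)`
has the same support as `H` and essential minimum `b(H') > b(H)/2`. -/
theorem ratBall_card_and_support {g N : ℕ} (hN : 0 < N)
    (H : Fin g → ℝ) (hH : IsHistogram H) (hne : (spt H).Nonempty) :
    (ratBall N H).Finite ∧ (ratBall N H).ncard ≤ 2 ^ g ∧
    ((2 / (spt H).inf' hne H < (N : ℝ)) →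
      ∀ H' ∈ ratBall N H, ∃ hne' : (spt H').Nonempty,
        spt H' = spt H ∧ (spt H).inf' hne H / 2 < (spt H').inf' hne' H') :=
  ratBall_card_and_support_general H hne
end

section
/- Fix a > 0, growth factors F_1 ≤ ... ≤ F_g with F_1 > 0, and a transfer matrix Q with nonnegative entries and zero diagonal. For any N > g²/(a·F_1), any histogram H with b(H) ≥ a, and any g×g matrix r in the constraint set K(H) (nonnegative entries, row sums Σ_k r_{j,k} < F_j·H(j) for j ∈ spt(H), r_{j,k} = 0 if H(j) = 0 or Q_{j,k} = 0), there exists an N-rational matrix s ∈ K(H) (i.e., N·s has integer entries) with spt(s) = spt(r) and max_{j,k} |s_{j,k} − r_{j,k}| ≤ g/N. -/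
open Real Finset

/-- Membership in the mutation constraint set `K(H)`. -/
def MemK {g : ℕ} (F : Fin g → ℝ) (Q : Matrix (Fin g) (Fin g) ℝ)
    (H : Fin g → ℝ) (r : Matrix (Fin g) (Fin g) ℝ) : Prop :=
  (∀ j k, 0 ≤ r j k) ∧
  (∀ j, 0 < H j → ∑ k, r j k < F j * H j) ∧
  (∀ j k, H j = 0 → r j k = 0) ∧
  (∀ j k, Q j k = 0 → r j k = 0)

/-!
Shrink row `j` of `r` by the factor `1 - (g - 1) / (N F_j H(j))` and round every entry down to
the grid `ℕ / N`, except that a positive entry is never rounded below `1 / N`. Only that exception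
can increase an entry, by less than `1 / N`, and because the diagonal vanishes it happens at most
`g - 1` times per row: the loss `(g - 1) / N` is exactly the room the shrinking made below
`F_j H(j)`. The shrinking moves an entry by at most `(g - 1) / N`, the rounding by at most `1 / N`.
The bound `N > g² / (a F_1)` makes the shrinking factor positive.
-/

lemma natCast_max_one_floor_le {x : ℝ} (hx : 0 ≤ x) :
    ((max 1 ⌊x⌋₊ : ℕ) : ℝ) ≤ x + 1 := by
  rw [Nat.cast_max, Nat.cast_one]
  exact max_le (by linarith) ((Nat.floor_le hx).trans (by linarith))

lemma sub_one_lt_natCast_max_one_floor (x : ℝ) : x - 1 < ((max 1 ⌊x⌋₊ : ℕ) : ℝ) :=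
  (Nat.sub_one_lt_floor x).trans_le (by exact_mod_cast le_max_right _ _)

noncomputable def roundToGrid {ι : Type*} (N : ℕ) (t : ℝ) (v : ι → ℝ) (k : ι) : ℝ :=
  if v k = 0 then 0 else ((max 1 ⌊N * (t * v k)⌋₊ : ℕ) : ℝ) / N

section roundToGrid

variable {ι : Type*} {N : ℕ} {t : ℝ} {v : ι → ℝ} {k : ι}

lemma roundToGrid_of_eq_zero (h : v k = 0) : roundToGrid N t v k = 0 := if_pos h

lemma exists_roundToGrid_eq_natCast_div : ∃ n : ℕ, roundToGrid N t v k = n / N := by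
  unfold roundToGrid
  split_ifs
  · exact ⟨0, by simp⟩
  · exact ⟨_, rfl⟩

lemma roundToGrid_nonneg : 0 ≤ roundToGrid N t v k := by
  unfold roundToGrid
  split_ifs <;> positivity

lemma roundToGrid_pos_iff (hN : 0 < N) (hv : 0 ≤ v k) :
    0 < roundToGrid N t v k ↔ 0 < v k := by
  unfold roundToGrid
  split_ifs with h
  · simp [h]
  · simp only [hv.lt_of_ne' h, iff_true]
    positivity

lemma roundToGrid_le (hN : 0 < N) (htv : 0 ≤ t * v k) :
    roundToGrid N t v k ≤ t * v k + 1 / N := by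
  have hN' : (0 : ℝ) < N := by exact_mod_cast hN
  unfold roundToGrid
  split_ifs
  · positivity
  · rw [div_le_iff₀ hN', add_mul, one_div_mul_cancel hN'.ne', mul_comm]
    exact natCast_max_one_floor_le (by positivity)

lemma sub_lt_roundToGrid (hN : 0 < N) : t * v k - 1 / N < roundToGrid N t v k := by
  have hN' : (0 : ℝ) < N := by exact_mod_cast hN
  unfold roundToGrid
  split_ifs with h
  · simp [h, hN']
  · rw [lt_div_iff₀ hN', sub_mul, one_div_mul_cancel hN'.ne', mul_comm]
    exact sub_one_lt_natCast_max_one_floor _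

lemma sum_roundToGrid_le [Fintype ι] (hN : 0 < N) (ht : 0 ≤ t) (hv : 0 ≤ v) :
    ∑ k, roundToGrid N t v k ≤ t * ∑ k, v k + #{k | v k ≠ 0} / N := by
  have hround : ∑ k with v k ≠ 0, roundToGrid N t v k = ∑ k, roundToGrid N t v k :=
    sum_filter_of_ne fun k _ h hk => h (roundToGrid_of_eq_zero hk)
  have hsum : ∑ k with v k ≠ 0, v k = ∑ k, v k := sum_filter_of_ne fun _ _ h => h
  calc ∑ k, roundToGrid N t v k
      = ∑ k with v k ≠ 0, roundToGrid N t v k := hround.symm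
    _ ≤ ∑ k with v k ≠ 0, (t * v k + 1 / N) :=
        sum_le_sum fun k _ => roundToGrid_le hN (mul_nonneg ht (hv k))
    _ = t * ∑ k, v k + #{k | v k ≠ 0} / N := by
        rw [sum_add_distrib, ← mul_sum, hsum, sum_const, nsmul_eq_mul, mul_one_div]

lemma sum_roundToGrid_shrink_lt [Fintype ι] {c d : ℝ} (hN : 0 < N) (hv : 0 ≤ v)
    (hvc : ∑ k, v k < c) (hcard : #{k | v k ≠ 0} / N ≤ d) (hdc : d < c) :
    ∑ k, roundToGrid N (1 - d / c) v k < c := by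
  have hd : 0 ≤ d := le_trans (by positivity) hcard
  have hc : 0 < c := hd.trans_lt hdc
  have ht : 0 < 1 - d / c := by rw [sub_pos, div_lt_one hc]; exact hdc
  calc ∑ k, roundToGrid N (1 - d / c) v k
      ≤ (1 - d / c) * ∑ k, v k + d :=
        (sum_roundToGrid_le hN ht.le hv).trans (by gcongr)
    _ < (1 - d / c) * c + d := by gcongr
    _ = c := by field_simp; ring

lemma abs_roundToGrid_shrink_sub_le {c d : ℝ} (hN : 0 < N) (hd : 0 ≤ d) (hdc : d ≤ c)
    (hv : 0 ≤ v k) (hvc : v k ≤ c) :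
    |roundToGrid N (1 - d / c) v k - v k| ≤ d + 1 / N := by
  rcases hv.eq_or_lt with hv0 | hvpos
  · rw [roundToGrid_of_eq_zero hv0.symm, ← hv0, sub_zero, abs_zero]
    positivity
  have hc : 0 < c := hvpos.trans_le hvc
  have hdc' : d / c ≤ 1 := (div_le_one hc).2 hdc
  have hshrink : d / c * v k ≤ d := by
    rw [div_mul_eq_mul_div, div_le_iff₀ hc]
    exact mul_le_mul_of_nonneg_left hvc hd
  have hupper := roundToGrid_le (t := 1 - d / c) hN (mul_nonneg (by linarith) hv)
  have hlower := sub_lt_roundToGrid (t := 1 - d / c) (v := v) (k := k) hN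
  rw [abs_le]
  constructor <;> nlinarith [div_nonneg hd hc.le]

end roundToGrid

lemma card_filter_ne_zero_add_one_le {ι : Type*} [Fintype ι] {v : ι → ℝ} {j : ι}
    (hj : v j = 0) : #{k | v k ≠ 0} + 1 ≤ Fintype.card ι :=
  card_lt_univ_of_notMem (x := j) (by simp [hj])

lemma sub_one_div_lt_of_sq_div_lt {g N : ℕ} {x y : ℝ} (hy : 0 < y)
    (hN : (g : ℝ) ^ 2 / y < N) (hyx : y ≤ x) : ((g : ℝ) - 1) / N < x := by
  have hN0 : (0 : ℝ) < N := (div_nonneg (sq_nonneg _) hy.le).trans_lt hN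
  rw [div_lt_iff₀ hy] at hN
  rw [div_lt_iff₀ hN0]
  nlinarith [sq_nonneg ((g : ℝ) - 1)]

theorem density_of_rational_matrices_general {g : ℕ} (hg : 0 < g)
    (a : ℝ) (ha : 0 < a)
    (F : Fin g → ℝ) (hFpos : ∀ j, 0 < F j) (hFmono : Monotone F)
    (Q : Matrix (Fin g) (Fin g) ℝ) (hQd : ∀ j, Q j j = 0)
    (N : ℕ) (hN : (g : ℝ) ^ 2 / (a * F ⟨0, hg⟩) < N)
    (H : Fin g → ℝ) (hH : IsHistogram H) (hne : (spt H).Nonempty)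
    (hb : a ≤ (spt H).inf' hne H)
    (r : Matrix (Fin g) (Fin g) ℝ) (hr : MemK F Q H r) :
    ∃ s : Matrix (Fin g) (Fin g) ℝ,
      MemK F Q H s ∧
      (∀ j k, ∃ n : ℕ, s j k = (n : ℝ) / N) ∧
      (∀ j k, 0 < s j k ↔ 0 < r j k) ∧
      (∀ j k, |s j k - r j k| ≤ (g : ℝ) / N) := by
  obtain ⟨hr_nonneg, hr_sum, hr_H, hr_Q⟩ := hr
  have haF : 0 < a * F ⟨0, hg⟩ := mul_pos ha (hFpos _)
  have hN0 : 0 < N := by exact_mod_cast (div_nonneg (sq_nonneg _) haF.le).trans_lt hN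
  have hslack (j : Fin g) (hj : 0 < H j) : ((g : ℝ) - 1) / N < F j * H j := by
    have hF : F ⟨0, hg⟩ ≤ F j := hFmono (Nat.zero_le _)
    have hH : a ≤ H j := hb.trans (inf'_le _ (by simp [spt, hj]))
    have hFH : a * F ⟨0, hg⟩ ≤ F j * H j := by
      rw [mul_comm]
      exact mul_le_mul hF hH ha.le (hFpos j).le
    exact sub_one_div_lt_of_sq_div_lt haF hN hFH
  have hcard (j : Fin g) : (#{k | r j k ≠ 0} : ℝ) / N ≤ ((g : ℝ) - 1) / N := by
    have hle : (#{k | r j k ≠ 0} : ℝ) + 1 ≤ g := by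
      exact_mod_cast (card_filter_ne_zero_add_one_le (hr_Q j j (hQd j))).trans_eq
        (Fintype.card_fin g)
    gcongr
    linarith
  refine ⟨fun j => roundToGrid N (1 - ((g : ℝ) - 1) / N / (F j * H j)) (r j),
    ⟨fun _ _ => roundToGrid_nonneg,
      fun j hj => sum_roundToGrid_shrink_lt hN0 (hr_nonneg j) (hr_sum j hj) (hcard j) (hslack j hj),
      fun j k h => roundToGrid_of_eq_zero (hr_H j k h),
      fun j k h => roundToGrid_of_eq_zero (hr_Q j k h)⟩,
    fun _ _ => exists_roundToGrid_eq_natCast_div,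
    fun j k => roundToGrid_pos_iff hN0 (hr_nonneg j k), fun j k => ?_⟩
  by_cases hj : 0 < H j
  · have hrjk : r j k ≤ F j * H j :=
      (single_le_sum (fun k _ => hr_nonneg j k) (mem_univ k)).trans (hr_sum j hj).le
    have hd : 0 ≤ ((g : ℝ) - 1) / N :=
      div_nonneg (sub_nonneg.2 (Nat.one_le_cast.2 hg)) N.cast_nonneg
    calc _ ≤ ((g : ℝ) - 1) / N + 1 / N :=
          abs_roundToGrid_shrink_sub_le hN0 hd (hslack j hj).le (hr_nonneg j k) hrjk
      _ = g / N := by ring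
  · have hzero : r j k = 0 := hr_H j k (le_antisymm (not_lt.1 hj) (hH.1 j))
    simp only [roundToGrid_of_eq_zero hzero, hzero, sub_zero, abs_zero]
    positivity

/-- Density of `N`-rational matrices in the constraint set `K(H)`: for
`N > g²/(a·F₁)`, any `r ∈ K(H)` with `b(H) ≥ a` admits an `N`-rational matrix
`s ∈ K(H)` with the same support and `‖s − r‖ ≤ g/N`. -/
theorem density_of_rational_matrices {g : ℕ} (hg : 0 < g)
    (a : ℝ) (ha : 0 < a)
    (F : Fin g → ℝ) (hFpos : ∀ j, 0 < F j) (hFmono : Monotone F)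
    (Q : Matrix (Fin g) (Fin g) ℝ) (hQ : ∀ j k, 0 ≤ Q j k) (hQd : ∀ j, Q j j = 0)
    (N : ℕ) (hN : (g : ℝ) ^ 2 / (a * F ⟨0, hg⟩) < N)
    (H : Fin g → ℝ) (hH : IsHistogram H) (hne : (spt H).Nonempty)
    (hb : a ≤ (spt H).inf' hne H)
    (r : Matrix (Fin g) (Fin g) ℝ) (hr : MemK F Q H r) :
    ∃ s : Matrix (Fin g) (Fin g) ℝ,
      MemK F Q H s ∧
      (∀ j k, ∃ n : ℕ, s j k = (n : ℝ) / N) ∧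
      (∀ j k, 0 < s j k ↔ 0 < r j k) ∧
      (∀ j k, |s j k - r j k| ≤ (g : ℝ) / N) :=
  density_of_rational_matrices_general hg a ha F hFpos hFmono Q hQd N hN H hH hne hb r hr
end

section
/- Let G and J be histograms with spt(G) ⊆ spt(J), and define the Kullback–Leibler divergence KL(G,J) = Σ_{j∈spt(G)} G(j)·log(G(j)/J(j)) and β(G,J) = max_{k∈spt(G)} 1/J(k). Then KL(G,J) ≤ log β(G,J) ≤ (KL(G,J) + log g)/b(G). -/
open Real Finset

/-- Kullback–Leibler divergence between histograms (on the support of `G`). -/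
noncomputable def KL {g : ℕ} (G J : Fin g → ℝ) : ℝ :=
  ∑ j ∈ spt G, G j * Real.log (G j / J j)

/-- Bounds relating `KL(G,J)` and `β(G,J) = max_{k ∈ spt G} 1/J(k)`:
`KL(G,J) ≤ log β(G,J) ≤ (KL(G,J) + log g)/b(G)`. -/
theorem KL_beta_bounds {g : ℕ} (G J : Fin g → ℝ)
    (hG : IsHistogram G) (hJ : IsHistogram J)
    (hsub : ∀ j, 0 < G j → 0 < J j)
    (hne : (spt G).Nonempty) :
    KL G J ≤ Real.log ((spt G).sup' hne (fun k => 1 / J k)) ∧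
    Real.log ((spt G).sup' hne (fun k => 1 / J k)) ≤
      (KL G J + Real.log g) / (spt G).inf' hne G := by
  obtain ⟨hGnn, hGsum⟩ := hG
  obtain ⟨hJnn, hJsum⟩ := hJ
  have hmem : ∀ j, j ∈ spt G ↔ 0 < G j := by
    intro j; simp [spt]
  have hGpos : ∀ j ∈ spt G, 0 < G j := fun j hj => (hmem j).1 hj
  have hJpos : ∀ j ∈ spt G, 0 < J j := fun j hj => hsub j (hGpos j hj)
  have hJle1 : ∀ j ∈ spt G, J j ≤ 1 := by
    intro j hj
    rw [← hJsum]
    exact Finset.single_le_sum (fun i _ => hJnn i) (Finset.mem_univ j)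
  have hGle1 : ∀ j, G j ≤ 1 := by
    intro j
    rw [← hGsum]
    exact Finset.single_le_sum (fun i _ => hGnn i) (Finset.mem_univ j)
  have hsum1 : ∑ j ∈ spt G, G j = 1 := by
    rw [← hGsum]
    refine Finset.sum_subset (Finset.subset_univ _) ?_
    intro j _ hj
    have := (hGnn j).eq_or_lt
    rcases this with h | h
    · exact h.symm
    · exact absurd ((hmem j).2 h) hj
  set β := (spt G).sup' hne (fun k => 1 / J k) with hβ
  obtain ⟨k₀, hk₀, hk₀eq⟩ := Finset.exists_mem_eq_sup' hne (fun k => 1 / J k)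
  have hβpos : 0 < β := by
    rw [hβ, hk₀eq]
    exact one_div_pos.2 (hJpos k₀ hk₀)
  -- each log(1/J j) nonneg
  have hlognn : ∀ j ∈ spt G, 0 ≤ Real.log (1 / J j) := by
    intro j hj
    apply Real.log_nonneg
    rw [le_div_iff₀ (hJpos j hj), one_mul]
    exact hJle1 j hj
  set b := (spt G).inf' hne G with hb
  have hbpos : 0 < b := by
    rw [hb]
    obtain ⟨k₁, hk₁, hk₁eq⟩ := Finset.exists_mem_eq_inf' hne G
    rw [hk₁eq]; exact hGpos k₁ hk₁
  -- S := ∑ G j * log (1/J j)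
  set S := ∑ j ∈ spt G, G j * Real.log (1 / J j) with hS
  -- first bound: KL ≤ log β
  have h1 : KL G J ≤ Real.log β := by
    calc KL G J ≤ S := by
          apply Finset.sum_le_sum
          intro j hj
          apply mul_le_mul_of_nonneg_left _ (hGnn j)
          apply Real.log_le_log (div_pos (hGpos j hj) (hJpos j hj))
          gcongr
          · exact (hJpos j hj).le
          · exact hGle1 j
      _ ≤ ∑ j ∈ spt G, G j * Real.log β := by
          apply Finset.sum_le_sum
          intro j hj
          apply mul_le_mul_of_nonneg_left _ (hGnn j)
          apply Real.log_le_log (one_div_pos.2 (hJpos j hj))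
          exact Finset.le_sup' (f := fun k => 1 / J k) hj
      _ = Real.log β := by rw [← Finset.sum_mul, hsum1, one_mul]
  -- entropy bound: ∑ G j * log (1/G j) ≤ log g
  have hcard : (0 : ℝ) < (spt G).card := by
    exact_mod_cast Finset.card_pos.2 hne
  have hent : ∑ j ∈ spt G, G j * Real.log (1 / G j) ≤ Real.log g := by
    have hjensen := (strictConcaveOn_log_Ioi.concaveOn).le_map_sum
      (t := spt G) (w := G) (p := fun j => 1 / G j)
      (fun i hi => hGnn i) hsum1 (fun i hi => Set.mem_Ioi.2 (one_div_pos.2 (hGpos i hi)))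
    simp only [smul_eq_mul] at hjensen
    have hsum2 : ∑ i ∈ spt G, G i * (1 / G i) = (spt G).card := by
      rw [Finset.sum_congr rfl (fun i hi => mul_one_div_cancel (hGpos i hi).ne')]
      simp
    rw [hsum2] at hjensen
    refine hjensen.trans (Real.log_le_log hcard ?_)
    have : (spt G).card ≤ g := by
      simpa using Finset.card_le_card (Finset.subset_univ (spt G))
    exact_mod_cast this
  -- KL = ∑ G j * log G j + S
  have hKLS : S = KL G J + ∑ j ∈ spt G, G j * Real.log (1 / G j) := by
    rw [KL, ← Finset.sum_add_distrib]
    apply Finset.sum_congr rfl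
    intro j hj
    rw [← mul_add, Real.log_div (hGpos j hj).ne' (hJpos j hj).ne',
      Real.log_div one_ne_zero (hGpos j hj).ne', Real.log_one,
      Real.log_div one_ne_zero (hJpos j hj).ne', Real.log_one]
    ring
  have hSle : S ≤ KL G J + Real.log g := by
    rw [hKLS]; linarith
  -- b * log β ≤ S
  have h2 : b * Real.log β ≤ S := by
    have hterm : G k₀ * Real.log (1 / J k₀) ≤ S := by
      apply Finset.single_le_sum (f := fun j => G j * Real.log (1 / J j)) _ hk₀
      intro i hi
      exact mul_nonneg (hGnn i) (hlognn i hi)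
    refine le_trans ?_ hterm
    rw [hβ, hk₀eq]
    apply mul_le_mul_of_nonneg_right _ (hlognn k₀ hk₀)
    exact Finset.inf'_le _ hk₀
  refine ⟨h1, ?_⟩
  rw [le_div_iff₀ hbpos]
  calc Real.log β * b = b * Real.log β := mul_comm _ _
    _ ≤ S := h2
    _ ≤ KL G J + Real.log g := hSle
end

section
/- Let J, G be histograms with spt(G) ⊆ spt(J) and G N-rational (all coordinates of N·G are integers). Then the multinomial probability μ_{N,J}(N·G) = N!·Π_{j∈spt(G)} J(j)^{N·G(j)}/(N·G(j))! satisfies |(1/N)·log μ_{N,J}(N·G) + KL(G,J)| ≤ 2·(g+1)·log(N)/N. -/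
/-!
Write `R(k) = log k! - (k log k - k)` for the Stirling remainder. Because `∑ V j = N` and
`G j = V j / N`, the `log J j` terms and the leading Stirling terms cancel exactly:
`log μ_{N,J}(N·G) + N · KL(G, J) = R(N) - ∑_{j ∈ spt G} R(V j)`. The effective Stirling bounds
`√π ≤ k! / (√(2k) (k/e)^k) ≤ e/√2` give `0 ≤ R(k) ≤ 1 + (log k) / 2`, which is at most `2 log N`
for `k ≤ N` once `N ≥ 2` (as `log 2 > 2/3`), so the right-hand side is at most `2 (g + 1) log N`
in absolute value.
-/

open Real Finset Nat

noncomputable def stirlingRemainder (k : ℕ) : ℝ :=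
  Real.log k ! - (k * Real.log k - k)

theorem stirlingRemainder_nonneg (k : ℕ) : 0 ≤ stirlingRemainder k := by
  obtain rfl | hk := eq_or_ne k 0
  · simp [stirlingRemainder]
  have hlog_k : 0 ≤ Real.log k := Real.log_natCast_nonneg k
  have hlog_two_pi : 0 ≤ Real.log (2 * π) := Real.log_nonneg (by linarith [Real.pi_gt_three])
  have := Stirling.le_log_factorial_stirling hk
  unfold stirlingRemainder
  linarith

theorem stirlingRemainder_le_one_add_half_log {k : ℕ} (hk : k ≠ 0) :
    stirlingRemainder k ≤ 1 + Real.log k / 2 := by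
  obtain ⟨m, rfl⟩ := Nat.exists_eq_succ_of_ne_zero hk
  have hseq : Stirling.stirlingSeq (m + 1) ≤ Stirling.stirlingSeq 1 :=
    Stirling.stirlingSeq'_antitone (Nat.zero_le m)
  have hlog_seq : Real.log (Stirling.stirlingSeq (m + 1)) ≤ 1 - Real.log 2 / 2 := by
    calc Real.log (Stirling.stirlingSeq (m + 1)) ≤ Real.log (Stirling.stirlingSeq 1) :=
          Real.log_le_log (Stirling.stirlingSeq'_pos m) hseq
      _ = 1 - Real.log 2 / 2 := by
          rw [Stirling.stirlingSeq_one, Real.log_div (by positivity) (by positivity),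
            Real.log_exp, Real.log_sqrt (by norm_num)]
  have hk0 : (0 : ℝ) < (m + 1 : ℕ) := by positivity
  rw [Stirling.log_stirlingSeq_formula, Real.log_mul two_ne_zero hk0.ne',
    Real.log_div hk0.ne' (Real.exp_pos 1).ne', Real.log_exp] at hlog_seq
  unfold stirlingRemainder
  linarith

theorem stirlingRemainder_le_two_mul_log {k N : ℕ} (hkN : k ≤ N) (hN : 2 ≤ N) :
    stirlingRemainder k ≤ 2 * Real.log N := by
  have hlog_two : (2 / 3 : ℝ) < Real.log 2 := by linarith [Real.log_two_gt_d9]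
  have hlog_two_le : Real.log 2 ≤ Real.log N := Real.log_le_log two_pos (by exact_mod_cast hN)
  obtain rfl | hk := eq_or_ne k 0
  · simp only [stirlingRemainder, CharP.cast_eq_zero, factorial_zero, Nat.cast_one, Real.log_one]
    linarith
  have hlog_k_le : Real.log k ≤ Real.log N :=
    Real.log_le_log (by positivity) (by exact_mod_cast hkN)
  linarith [stirlingRemainder_le_one_add_half_log hk]

theorem abs_stirlingRemainder_sub_sum_le {ι : Type*} (s : Finset ι) (V : ι → ℕ) {N : ℕ}
    (hN : 2 ≤ N) (hVN : ∀ j ∈ s, V j ≤ N) :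
    |stirlingRemainder N - ∑ j ∈ s, stirlingRemainder (V j)| ≤
      2 * (#s + 1) * Real.log N := by
  have hlog_N : 0 ≤ Real.log N := Real.log_natCast_nonneg N
  have hsum_le : ∑ j ∈ s, stirlingRemainder (V j) ≤ #s * (2 * Real.log N) := by
    simpa using sum_le_card_nsmul s _ _
      fun j hj => stirlingRemainder_le_two_mul_log (hVN j hj) hN
  refine abs_sub_le_of_nonneg_of_le (stirlingRemainder_nonneg N) ?_
    (sum_nonneg fun j _ => stirlingRemainder_nonneg (V j)) ?_
  · linarith [stirlingRemainder_le_two_mul_log le_rfl hN,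
      mul_nonneg (Nat.cast_nonneg (α := ℝ) #s) hlog_N]
  · linarith

theorem log_multinomial_add_sum_mul_log_div {ι : Type*} (s : Finset ι) (J : ι → ℝ) (V : ι → ℕ)
    {N : ℕ} (hJ : ∀ j ∈ s, J j ≠ 0) (hV : ∀ j ∈ s, V j ≠ 0) (hsum : ∑ j ∈ s, V j = N) :
    Real.log (N ! * ∏ j ∈ s, J j ^ V j / (V j)!) + ∑ j ∈ s, V j * Real.log (V j / N / J j) =
      stirlingRemainder N - ∑ j ∈ s, stirlingRemainder (V j) := by
  have hterm_ne : ∀ j ∈ s, J j ^ V j / ((V j)! : ℝ) ≠ 0 := fun j hj =>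
    div_ne_zero (pow_ne_zero _ (hJ j hj)) (by positivity)
  have hterm : ∀ j ∈ s, Real.log (J j ^ V j / (V j)!) + V j * Real.log (V j / N / J j) =
      V j * (1 - Real.log N) - stirlingRemainder (V j) := by
    intro j hj
    have hN : (N : ℝ) ≠ 0 := by
      have := hsum ▸ single_le_sum (fun i _ => Nat.zero_le (V i)) hj
      have := hV j hj
      exact Nat.cast_ne_zero.2 (by omega)
    rw [Real.log_div (pow_ne_zero _ (hJ j hj)) (by positivity), Real.log_pow,
      Real.log_div (div_ne_zero (by exact_mod_cast hV j hj) hN) (hJ j hj),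
      Real.log_div (by exact_mod_cast hV j hj) hN, stirlingRemainder]
    ring
  rw [Real.log_mul (by positivity) (prod_ne_zero_iff.2 hterm_ne), Real.log_prod hterm_ne,
    add_assoc, ← sum_add_distrib, sum_congr rfl hterm, sum_sub_distrib, ← sum_mul,
    ← Nat.cast_sum, hsum, stirlingRemainder]
  ring

theorem spt_eq_filter_ne_zero {g N : ℕ} {G : Fin g → ℝ} {V : Fin g → ℕ} (hN : N ≠ 0)
    (hGV : ∀ j, G j = (V j : ℝ) / N) : spt G = univ.filter (fun j => V j ≠ 0) := by
  ext j
  simp only [spt, mem_filter, mem_univ, true_and, hGV j]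
  rw [div_pos_iff_of_pos_right (by positivity), Nat.cast_pos, Nat.pos_iff_ne_zero]

theorem mul_KL_eq_sum {g N : ℕ} {G : Fin g → ℝ} (J : Fin g → ℝ) {V : Fin g → ℕ} (hN : N ≠ 0)
    (hGV : ∀ j, G j = (V j : ℝ) / N) :
    N * KL G J = ∑ j ∈ spt G, V j * Real.log (V j / N / J j) := by
  rw [KL, mul_sum]
  refine sum_congr rfl fun j _ => ?_
  rw [hGV j]
  field_simp

theorem multinomial_large_deviations_general {g : ℕ} (N : ℕ) (hN : 2 ≤ N)
    (G J : Fin g → ℝ)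
    (hsub : ∀ j, 0 < G j → 0 < J j)
    (V : Fin g → ℕ) (hV : ∑ j, V j = N) (hGV : ∀ j, G j = (V j : ℝ) / N) :
    |(1 / (N : ℝ)) *
        Real.log ((N ! : ℝ) * ∏ j ∈ spt G, J j ^ (V j) / (V j)!) +
      KL G J| ≤ 2 * ((g : ℝ) + 1) * Real.log N / N := by
  have hN0 : N ≠ 0 := by omega
  have hspt := spt_eq_filter_ne_zero hN0 hGV
  have hV_spt : ∀ j ∈ spt G, V j ≠ 0 := fun j hj => by simpa [hspt] using hj
  have hsum : ∑ j ∈ spt G, V j = N := by rw [hspt, sum_filter_ne_zero, hV]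
  have hJ : ∀ j ∈ spt G, J j ≠ 0 := fun j hj => (hsub j (mem_filter.1 hj).2).ne'
  have hVN : ∀ j ∈ spt G, V j ≤ N := fun j hj =>
    hsum ▸ single_le_sum (fun i _ => Nat.zero_le (V i)) hj
  have hcard : #(spt G) ≤ g := (card_le_univ _).trans_eq (Fintype.card_fin g)
  have hbound := abs_stirlingRemainder_sub_sum_le (spt G) V hN hVN
  rw [← log_multinomial_add_sum_mul_log_div (spt G) J V hJ hV_spt hsum,
    ← mul_KL_eq_sum J hN0 hGV] at hbound
  have hN_pos : (0 : ℝ) < N := by positivity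
  have hlog_N : 0 ≤ Real.log N := Real.log_natCast_nonneg N
  rw [show 1 / (N : ℝ) * Real.log (N ! * ∏ j ∈ spt G, J j ^ V j / (V j)!) + KL G J =
      (Real.log (N ! * ∏ j ∈ spt G, J j ^ V j / (V j)!) + N * KL G J) / N by field_simp,
    abs_div, abs_of_pos hN_pos]
  gcongr
  exact hbound.trans (by gcongr)

/-- Large deviations estimate for the multinomial distribution: if `G = V/N` is an
`N`-rational histogram with `spt G ⊆ spt J`, then the multinomial probability
`μ_{N,J}(N·G) = N!·∏_{j ∈ spt G} J(j)^{V(j)}/V(j)!` satisfies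
`|(1/N)·log μ_{N,J}(N·G) + KL(G,J)| ≤ 2(g+1)·log N / N`. -/
theorem multinomial_large_deviations {g : ℕ} (N : ℕ) (hN : 2 ≤ N)
    (G J : Fin g → ℝ) (hG : IsHistogram G) (hJ : IsHistogram J)
    (hsub : ∀ j, 0 < G j → 0 < J j)
    (V : Fin g → ℕ) (hV : ∑ j, V j = N) (hGV : ∀ j, G j = (V j : ℝ) / N) :
    |(1 / (N : ℝ)) *
        Real.log ((N ! : ℝ) * ∏ j ∈ spt G, J j ^ (V j) / (V j)!) +
      KL G J| ≤ 2 * ((g : ℝ) + 1) * Real.log N / N :=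
  multinomial_large_deviations_general N hN G J hsub V hV hGV
end
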